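/- (L∞ bound on biomass, Lemma 3.3, one-dimensional case.) If (B, p, P) is a positive classical solution of the one-dimensional system on [0,L]×[0,T] whose initial data satisfy Q_m ≤ p(x,0)/B(x,0) ≤ Q_M for every x ∈ [0,L], then B(x,t) ≤ max{ max_{y∈[0,L]} B(y,0), B̄ } for every (x,t) ∈ [0,L]×[0,T], where B̄ = (1/k)·( (r/(z_m·l + D))·((Q_M − Q_m)/Q_M)·ln((H + I_in)/H) − K_bg ). -/

import Mathlib

open Set

/-- Light intensity at depth `s` with biomass `B`:  `I(s,B) = I_in · exp(−(K_bg + k·B)·s)`. -/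
noncomputable def lightI (I_in K_bg k : ℝ) (s B : ℝ) : ℝ :=
  I_in * Real.exp (-((K_bg + k * B) * s))

/-- Light-limited growth factor
`h(B) = ln((H + I_in)/(H + I(z_m,B)))/(z_m·(k·B + K_bg))`. -/
noncomputable def hfun (z_m k K_bg H I_in : ℝ) (B : ℝ) : ℝ :=
  Real.log ((H + I_in) / (H + lightI I_in K_bg k z_m B)) / (z_m * (k * B + K_bg))

/-- Uptake function `η(B,p,P) = ρ_m·((Q_M·B − p)/(Q_M − Q_m))·(P/(P + M))`. -/
noncomputable def etafun (ρ_m Q_m Q_M M : ℝ) (B p P : ℝ) : ℝ :=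
  ρ_m * ((Q_M * B - p) / (Q_M - Q_m)) * (P / (P + M))

/-- Partial derivative in time (`t` is the second argument). -/
noncomputable def pt (f : ℝ → ℝ → ℝ) (x t : ℝ) : ℝ := deriv (fun τ => f x τ) t

/-- Partial derivative in space (`x` is the first argument). -/
noncomputable def px (f : ℝ → ℝ → ℝ) (x t : ℝ) : ℝ := deriv (fun y => f y t) x

/-- Second partial derivative in space. -/
noncomputable def pxx (f : ℝ → ℝ → ℝ) (x t : ℝ) : ℝ := deriv (fun y => px f y t) x

/-- The regularity required of each component of a classical solution on
`[0,L]×[0,T]`: continuity on `[0,L]×[0,T]`, existence of the partial derivatives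
`∂_t`, `∂_x`, `∂_xx` on `[0,L]×(0,T]`, and their continuity there. -/
def ClassReg (L T : ℝ) (f : ℝ → ℝ → ℝ) : Prop :=
  ContinuousOn (fun q : ℝ × ℝ => f q.1 q.2) (Icc 0 L ×ˢ Icc 0 T) ∧
  (∀ x ∈ Icc (0:ℝ) L, ∀ t ∈ Ioc (0:ℝ) T,
    DifferentiableAt ℝ (fun τ => f x τ) t ∧
    DifferentiableAt ℝ (fun y => f y t) x ∧
    DifferentiableAt ℝ (fun y => px f y t) x) ∧
  ContinuousOn (fun q : ℝ × ℝ => pt f q.1 q.2) (Icc 0 L ×ˢ Ioc 0 T) ∧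
  ContinuousOn (fun q : ℝ × ℝ => px f q.1 q.2) (Icc 0 L ×ˢ Ioc 0 T) ∧
  ContinuousOn (fun q : ℝ × ℝ => pxx f q.1 q.2) (Icc 0 L ×ˢ Ioc 0 T)

/-- A positive classical solution of the one-dimensional
reaction–diffusion–advection system on `[0,L]×[0,T]`. -/
def IsPosClassicalSol
    (α β β_B β_P r Q_m Q_M z_m k K_bg H I_in l D ρ_m M P_h : ℝ)
    (v : ℝ → ℝ) (L T : ℝ) (B p P : ℝ → ℝ → ℝ) : Prop :=
  -- regularity
  ClassReg L T B ∧ ClassReg L T p ∧ ClassReg L T P ∧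
  -- strict positivity on [0,L]×[0,T]
  (∀ x ∈ Icc (0:ℝ) L, ∀ t ∈ Icc (0:ℝ) T,
    0 < B x t ∧ 0 < p x t ∧ 0 < P x t) ∧
  -- the three PDEs on [0,L]×(0,T]
  (∀ x ∈ Icc (0:ℝ) L, ∀ t ∈ Ioc (0:ℝ) T,
    pt B x t = α * pxx B x t - β_B * v t * px B x t
      + r * (1 - Q_m * B x t / p x t) * hfun z_m k K_bg H I_in (B x t) * B x t
      - l * B x t - (D / z_m) * B x t) ∧
  (∀ x ∈ Icc (0:ℝ) L, ∀ t ∈ Ioc (0:ℝ) T,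
    pt p x t = α * pxx p x t - β_B * v t * px p x t
      + etafun ρ_m Q_m Q_M M (B x t) (p x t) (P x t)
      - l * p x t - (D / z_m) * p x t) ∧
  (∀ x ∈ Icc (0:ℝ) L, ∀ t ∈ Ioc (0:ℝ) T,
    pt P x t = β * pxx P x t - β_P * v t * px P x t
      + (D / z_m) * (P_h - P x t)
      - etafun ρ_m Q_m Q_M M (B x t) (p x t) (P x t)
      + l * p x t) ∧
  -- Neumann boundary conditions
  (∀ t ∈ Ioc (0:ℝ) T,
    px B 0 t = 0 ∧ px B L t = 0 ∧ px p 0 t = 0 ∧ px p L t = 0 ∧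
    px P 0 t = 0 ∧ px P L t = 0)

/-- The explicit bound
`B̄ = (1/k)·( (r/(z_m·l + D))·((Q_M − Q_m)/Q_M)·ln((H + I_in)/H) − K_bg )`. -/
noncomputable def Bbar (r Q_m Q_M z_m k K_bg H I_in l D : ℝ) : ℝ :=
  (1 / k) * ((r / (z_m * l + D)) * ((Q_M - Q_m) / Q_M) * Real.log ((H + I_in) / H)
    - K_bg)

open Filter Topology in
private lemma time_deriv_nonneg {h : ℝ → ℝ} {d t0 T : ℝ} (ht0 : t0 ∈ Ioc (0:ℝ) T)
    (hd : HasDerivAt h d t0) (hmax : ∀ t ∈ Icc (0:ℝ) T, h t ≤ h t0) : 0 ≤ d := by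
  have hslope := hasDerivAt_iff_tendsto_slope.mp hd
  have h2 : Tendsto (slope h t0) (𝓝[<] t0) (𝓝 d) :=
    hslope.mono_left (nhdsWithin_mono _ (fun y hy => ne_of_lt hy))
  refine ge_of_tendsto h2 ?_
  filter_upwards [Ioo_mem_nhdsLT ht0.1] with t ht
  have hle := hmax t ⟨ht.1.le, ht.2.le.trans ht0.2⟩
  rw [slope_def_field]
  exact div_nonneg_of_nonpos (by linarith) (by linarith [ht.2])

open Filter Topology in
private lemma space_max_lemma {g G : ℝ → ℝ} {G' L x0 : ℝ} (hL : 0 < L) (hx0 : x0 ∈ Icc (0:ℝ) L)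
    (hmax : ∀ y ∈ Icc (0:ℝ) L, g y ≤ g x0)
    (hg : ∀ y ∈ Icc (0:ℝ) L, HasDerivAt g (G y) y)
    (hG : HasDerivAt G G' x0)
    (hG0 : G 0 = 0) (hGL : G L = 0) :
    G x0 = 0 ∧ G' ≤ 0 := by
  have Gx0 : G x0 = 0 := by
    by_cases h0 : x0 = 0
    · rw [h0]; exact hG0
    by_cases hLc : x0 = L
    · rw [hLc]; exact hGL
    · have h1 : 0 < x0 := lt_of_le_of_ne hx0.1 (Ne.symm h0)
      have h2 : x0 < L := lt_of_le_of_ne hx0.2 hLc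
      have hloc : IsLocalMax g x0 := by
        have hmem : Icc (0:ℝ) L ∈ 𝓝 x0 := Icc_mem_nhds h1 h2
        exact Filter.eventually_of_mem hmem hmax
      exact hloc.hasDerivAt_eq_zero (hg x0 hx0)
  refine ⟨Gx0, ?_⟩
  by_contra hpos
  push_neg at hpos
  have hslope := hasDerivAt_iff_tendsto_slope.mp hG
  have hev : ∀ᶠ y in 𝓝[≠] x0, 0 < slope G x0 y := hslope.eventually (eventually_gt_nhds hpos)
  rw [eventually_nhdsWithin_iff] at hev
  obtain ⟨δ, hδ, hball⟩ := Metric.eventually_nhds_iff.mp hev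
  by_cases hxL : x0 < L
  · set y1 := min L (x0 + δ/2) with hy1
    have hx0y1 : x0 < y1 := lt_min hxL (by linarith)
    have hy1L : y1 ≤ L := min_le_left _ _
    have hy1m : y1 ∈ Icc (0:ℝ) L := ⟨le_trans hx0.1 hx0y1.le, hy1L⟩
    have hsub : Icc x0 y1 ⊆ Icc (0:ℝ) L := Icc_subset_Icc hx0.1 hy1L
    have hGz : ∀ z ∈ Ioo x0 y1, 0 < G z := by
      intro z hz
      have hzd : dist z x0 < δ := by
        rw [Real.dist_eq, abs_of_pos (by linarith [hz.1] : (0:ℝ) < z - x0)]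
        have : z < x0 + δ/2 := lt_of_lt_of_le hz.2 (min_le_right _ _)
        linarith
      have hs := hball hzd (ne_of_gt hz.1)
      rw [slope_def_field, Gx0, sub_zero] at hs
      have hzx : (0:ℝ) < z - x0 := by linarith [hz.1]
      have := mul_pos hs hzx
      rwa [div_mul_cancel₀ _ (ne_of_gt hzx)] at this
    have hmono : StrictMonoOn g (Icc x0 y1) := by
      apply strictMonoOn_of_deriv_pos (convex_Icc _ _)
      · exact fun z hz => ((hg z (hsub hz)).differentiableAt.continuousAt).continuousWithinAt
      · intro z hz
        rw [interior_Icc] at hz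
        rw [(hg z (hsub (Ioo_subset_Icc_self hz))).deriv]
        exact hGz z hz
    have := hmono (left_mem_Icc.mpr hx0y1.le) (right_mem_Icc.mpr hx0y1.le) hx0y1
    have := hmax y1 hy1m
    linarith
  · have hxL' : x0 = L := le_antisymm hx0.2 (not_lt.mp hxL)
    have hx0pos : 0 < x0 := hxL' ▸ hL
    set y1 := max 0 (x0 - δ/2) with hy1
    have hy1x0 : y1 < x0 := max_lt hx0pos (by linarith)
    have hy1m : y1 ∈ Icc (0:ℝ) L := ⟨le_max_left _ _, le_trans hy1x0.le hx0.2⟩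
    have hsub : Icc y1 x0 ⊆ Icc (0:ℝ) L := Icc_subset_Icc hy1m.1 hx0.2
    have hGz : ∀ z ∈ Ioo y1 x0, G z < 0 := by
      intro z hz
      have hzd : dist z x0 < δ := by
        rw [Real.dist_eq, abs_of_neg (by linarith [hz.2] : z - x0 < 0)]
        have h5 : x0 - δ/2 ≤ y1 := le_max_right _ _
        have := hz.1
        linarith
      have hs := hball hzd (ne_of_lt hz.2)
      rw [slope_def_field, Gx0, sub_zero] at hs
      have hzx : z - x0 < 0 := by linarith [hz.2]
      have := mul_neg_of_pos_of_neg hs hzx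
      rwa [div_mul_cancel₀ _ (ne_of_lt hzx)] at this
    have hanti : StrictAntiOn g (Icc y1 x0) := by
      apply strictAntiOn_of_deriv_neg (convex_Icc _ _)
      · exact fun z hz => ((hg z (hsub hz)).differentiableAt.continuousAt).continuousWithinAt
      · intro z hz
        rw [interior_Icc] at hz
        rw [(hg z (hsub (Ioo_subset_Icc_self hz))).deriv]
        exact hGz z hz
    have := hanti (left_mem_Icc.mpr hy1x0.le) (right_mem_Icc.mpr hy1x0.le) hy1x0
    have := hmax y1 hy1m
    linarith

private lemma lightI_pos' {I_in K_bg k s b : ℝ} (hI : 0 < I_in) : 0 < lightI I_in K_bg k s b := by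
  unfold lightI; positivity

private lemma lightI_le' {I_in K_bg k z_m b : ℝ} (hI : 0 < I_in) (hK : 0 < K_bg) (hk : 0 < k)
    (hz : 0 < z_m) (hb : 0 < b) : lightI I_in K_bg k z_m b ≤ I_in := by
  unfold lightI
  have : Real.exp (-((K_bg + k * b) * z_m)) ≤ 1 := by
    rw [Real.exp_le_one_iff]
    nlinarith [mul_pos hk hb, mul_pos (mul_pos hk hb) hz, mul_pos hK hz]
  nlinarith [Real.exp_pos (-((K_bg + k * b) * z_m))]

private lemma hfun_nonneg' {z_m k K_bg H I_in b : ℝ} (hz : 0 < z_m) (hk : 0 < k) (hK : 0 < K_bg)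
    (hH : 0 < H) (hI : 0 < I_in) (hb : 0 < b) : 0 ≤ hfun z_m k K_bg H I_in b := by
  unfold hfun
  have h1 : 0 < lightI I_in K_bg k z_m b := lightI_pos' hI
  have h2 : lightI I_in K_bg k z_m b ≤ I_in := lightI_le' hI hK hk hz hb
  apply div_nonneg _ (by positivity)
  apply Real.log_nonneg
  rw [le_div_iff₀ (by linarith)]
  linarith

private lemma hfun_le' {z_m k K_bg H I_in b : ℝ} (hz : 0 < z_m) (hk : 0 < k) (hK : 0 < K_bg)
    (hH : 0 < H) (hI : 0 < I_in) (hb : 0 < b) :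
    hfun z_m k K_bg H I_in b ≤ Real.log ((H + I_in) / H) / (z_m * (k * b + K_bg)) := by
  unfold hfun
  have h1 : 0 < lightI I_in K_bg k z_m b := lightI_pos' hI
  have hden : (0:ℝ) < z_m * (k * b + K_bg) := by positivity
  have hlog : Real.log ((H + I_in) / (H + lightI I_in K_bg k z_m b))
      ≤ Real.log ((H + I_in) / H) :=
    Real.log_le_log (by positivity) (by gcongr; linarith)
  exact (div_le_div_iff_of_pos_right hden).mpr hlog

set_option maxHeartbeats 1000000 in
/-- L∞ bound on biomass, Lemma 3.3, one-dimensional case: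
`B(x,t) ≤ max{ max_{y∈[0,L]} B(y,0), B̄ }` on `[0,L]×[0,T]`. -/
theorem biomass_Linfty_bound
    (α β β_B β_P r Q_m Q_M z_m k K_bg H I_in l D ρ_m M P_h : ℝ)
    (hα : 0 < α) (hβ : 0 < β) (hβB : 0 < β_B) (hβP : 0 < β_P) (hr : 0 < r)
    (hQm : 0 < Q_m) (hQM : 0 < Q_M) (hzm : 0 < z_m) (hk : 0 < k)
    (hKbg : 0 < K_bg) (hH : 0 < H) (hIin : 0 < I_in) (hl : 0 < l) (hD : 0 < D)
    (hρm : 0 < ρ_m) (hM : 0 < M) (hQmM : Q_m < Q_M) (hPh : 0 ≤ P_h)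
    (L T : ℝ) (hL : 0 < L) (hT : 0 < T) (v : ℝ → ℝ) (hv : Continuous v)
    (B p P : ℝ → ℝ → ℝ)
    (hsol : IsPosClassicalSol α β β_B β_P r Q_m Q_M z_m k K_bg H I_in l D ρ_m M P_h
      v L T B p P)
    (hinit : ∀ x ∈ Icc (0:ℝ) L, Q_m ≤ p x 0 / B x 0 ∧ p x 0 / B x 0 ≤ Q_M) :
    ∀ x ∈ Icc (0:ℝ) L, ∀ t ∈ Icc (0:ℝ) T,
      B x t ≤ max (sSup ((fun y => B y 0) '' Icc (0:ℝ) L))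
        (Bbar r Q_m Q_M z_m k K_bg H I_in l D) := by
  obtain ⟨regB, regp, regP, hpos, eqB, eqp, eqP, hbc⟩ := hsol
  have hScomp : IsCompact (Icc (0:ℝ) L ×ˢ Icc (0:ℝ) T) := isCompact_Icc.prod isCompact_Icc
  have hSne : (Icc (0:ℝ) L ×ˢ Icc (0:ℝ) T).Nonempty :=
    ⟨(0, 0), ⟨⟨le_refl 0, hL.le⟩, ⟨le_refl 0, hT.le⟩⟩⟩
  -- Step 1: quota upper bound  p ≤ Q_M · B  on the whole domain
  have step1 : ∀ x ∈ Icc (0:ℝ) L, ∀ t ∈ Icc (0:ℝ) T, p x t ≤ Q_M * B x t := by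
    have wcont : ContinuousOn (fun q : ℝ × ℝ => p q.1 q.2 - Q_M * B q.1 q.2)
        (Icc (0:ℝ) L ×ˢ Icc (0:ℝ) T) := regp.1.sub (continuousOn_const.mul regB.1)
    obtain ⟨⟨x0, t0⟩, hmem0, hmax0⟩ := hScomp.exists_isMaxOn hSne wcont
    have hmaxw : ∀ x ∈ Icc (0:ℝ) L, ∀ t ∈ Icc (0:ℝ) T,
        p x t - Q_M * B x t ≤ p x0 t0 - Q_M * B x0 t0 := by
      intro x hx t ht
      exact isMaxOn_iff.mp hmax0 (x, t) (Set.mk_mem_prod hx ht)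
    have hx0 : x0 ∈ Icc (0:ℝ) L := hmem0.1
    have ht0I : t0 ∈ Icc (0:ℝ) T := hmem0.2
    intro x hx t ht
    by_contra hcon
    push_neg at hcon
    have hwpos : 0 < p x0 t0 - Q_M * B x0 t0 := by
      have := hmaxw x hx t ht; linarith
    have ht0pos : 0 < t0 := by
      rcases (lt_or_eq_of_le ht0I.1).symm with h0 | h0
      · exfalso
        have hB0 : 0 < B x0 0 := (hpos x0 hx0 0 ⟨le_refl 0, hT.le⟩).1
        have h1 : p x0 0 ≤ Q_M * B x0 0 := by
          have := (hinit x0 hx0).2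
          rw [div_le_iff₀ hB0] at this
          linarith [this]
        rw [h0] at h1
        linarith
      · exact h0
    have ht0 : t0 ∈ Ioc (0:ℝ) T := ⟨ht0pos, ht0I.2⟩
    obtain ⟨hBt, hBx, hBxx⟩ := regB.2.1 x0 hx0 t0 ht0
    obtain ⟨hptd, hpxd, hpxxd⟩ := regp.2.1 x0 hx0 t0 ht0
    have htime : 0 ≤ pt p x0 t0 - Q_M * pt B x0 t0 := by
      refine time_deriv_nonneg ht0 ((hptd.hasDerivAt).sub ((hBt.hasDerivAt).const_mul Q_M)) ?_
      intro t' ht'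
      exact hmaxw x0 hx0 t' ht'
    have hspace := space_max_lemma (g := fun y => p y t0 - Q_M * B y t0)
        (G := fun y => px p y t0 - Q_M * px B y t0)
        (G' := pxx p x0 t0 - Q_M * pxx B x0 t0) hL hx0
        (fun y hy => hmaxw y hy t0 ht0I)
        (fun y hy => by
          obtain ⟨_, h1, _⟩ := regp.2.1 y hy t0 ht0
          obtain ⟨_, h2, _⟩ := regB.2.1 y hy t0 ht0
          exact h1.hasDerivAt.sub (h2.hasDerivAt.const_mul Q_M))
        (hpxxd.hasDerivAt.sub (hBxx.hasDerivAt.const_mul Q_M))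
        (by obtain ⟨b1, _, b3, _, _, _⟩ := hbc t0 ht0
            show px p 0 t0 - Q_M * px B 0 t0 = 0
            rw [b1, b3]; ring)
        (by obtain ⟨_, b2, _, b4, _, _⟩ := hbc t0 ht0
            show px p L t0 - Q_M * px B L t0 = 0
            rw [b2, b4]; ring)
    obtain ⟨hGx0, hG'⟩ := hspace
    have hpx : px p x0 t0 = Q_M * px B x0 t0 := by
      have h : px p x0 t0 - Q_M * px B x0 t0 = 0 := hGx0
      linarith
    have eB := eqB x0 hx0 t0 ht0
    have ep := eqp x0 hx0 t0 ht0
    rw [hpx] at ep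
    have hBpos : 0 < B x0 t0 := (hpos x0 hx0 t0 ht0I).1
    have hppos : 0 < p x0 t0 := (hpos x0 hx0 t0 ht0I).2.1
    have hPpos : 0 < P x0 t0 := (hpos x0 hx0 t0 ht0I).2.2
    have heta : etafun ρ_m Q_m Q_M M (B x0 t0) (p x0 t0) (P x0 t0) < 0 := by
      unfold etafun
      have h1 : (Q_M * B x0 t0 - p x0 t0) / (Q_M - Q_m) < 0 :=
        div_neg_of_neg_of_pos (by linarith) (by linarith)
      have h2 : 0 < P x0 t0 / (P x0 t0 + M) := div_pos hPpos (by linarith)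
      exact mul_neg_of_neg_of_pos (mul_neg_of_pos_of_neg hρm h1) h2
    have hQmB : Q_m * B x0 t0 / p x0 t0 < 1 := by
      rw [div_lt_one hppos]
      nlinarith
    have hh0 : 0 ≤ hfun z_m k K_bg H I_in (B x0 t0) := hfun_nonneg' hzm hk hKbg hH hIin hBpos
    have hreact : 0 ≤ Q_M * (r * (1 - Q_m * B x0 t0 / p x0 t0) *
        hfun z_m k K_bg H I_in (B x0 t0) * B x0 t0) :=
      mul_nonneg hQM.le (mul_nonneg (mul_nonneg (mul_nonneg hr.le (by linarith)) hh0) hBpos.le)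
    have key : pt p x0 t0 - Q_M * pt B x0 t0 =
        α * (pxx p x0 t0 - Q_M * pxx B x0 t0)
        + etafun ρ_m Q_m Q_M M (B x0 t0) (p x0 t0) (P x0 t0)
        - (l + D / z_m) * (p x0 t0 - Q_M * B x0 t0)
        - Q_M * (r * (1 - Q_m * B x0 t0 / p x0 t0) *
            hfun z_m k K_bg H I_in (B x0 t0) * B x0 t0) := by
      rw [ep, eB]; ring
    have hlD : 0 < l + D / z_m := by positivity
    linarith [htime, key, heta, hreact, mul_nonneg hα.le (neg_nonneg.2 hG'), mul_pos hlD hwpos]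
  -- Step 2: bound on B
  have Bcont : ContinuousOn (fun q : ℝ × ℝ => B q.1 q.2) (Icc (0:ℝ) L ×ˢ Icc (0:ℝ) T) := regB.1
  obtain ⟨⟨x1, t1⟩, hmem1, hmax1⟩ := hScomp.exists_isMaxOn hSne Bcont
  have hx1 : x1 ∈ Icc (0:ℝ) L := hmem1.1
  have ht1I : t1 ∈ Icc (0:ℝ) T := hmem1.2
  have hmaxB : ∀ x ∈ Icc (0:ℝ) L, ∀ t ∈ Icc (0:ℝ) T, B x t ≤ B x1 t1 := by
    intro x hx t ht
    exact isMaxOn_iff.mp hmax1 (x, t) (Set.mk_mem_prod hx ht)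
  intro x hx t ht
  by_contra hcon
  push_neg at hcon
  have hKB : max (sSup ((fun y => B y 0) '' Icc (0:ℝ) L))
      (Bbar r Q_m Q_M z_m k K_bg H I_in l D) < B x1 t1 :=
    lt_of_lt_of_le hcon (hmaxB x hx t ht)
  have hcont0 : ContinuousOn (fun y => B y 0) (Icc (0:ℝ) L) := by
    have := regB.1.comp ((continuous_id.prodMk continuous_const).continuousOn
      (s := Icc (0:ℝ) L)) (fun y hy => Set.mk_mem_prod hy ⟨le_refl 0, hT.le⟩)
    exact this
  have hbd : BddAbove ((fun y => B y 0) '' Icc (0:ℝ) L) :=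
    (isCompact_Icc.image_of_continuousOn hcont0).bddAbove
  have ht1pos : 0 < t1 := by
    rcases (lt_or_eq_of_le ht1I.1).symm with h0 | h0
    · exfalso
      have h1 : B x1 0 ≤ sSup ((fun y => B y 0) '' Icc (0:ℝ) L) :=
        le_csSup hbd ⟨x1, hx1, rfl⟩
      have h2 := le_max_left (sSup ((fun y => B y 0) '' Icc (0:ℝ) L))
        (Bbar r Q_m Q_M z_m k K_bg H I_in l D)
      rw [← h0] at hKB
      linarith
    · exact h0
  have ht1 : t1 ∈ Ioc (0:ℝ) T := ⟨ht1pos, ht1I.2⟩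
  obtain ⟨hBt, hBx, hBxx⟩ := regB.2.1 x1 hx1 t1 ht1
  have htime : 0 ≤ pt B x1 t1 := by
    refine time_deriv_nonneg ht1 hBt.hasDerivAt ?_
    intro t' ht'
    exact hmaxB x1 hx1 t' ht'
  have hspace := space_max_lemma (g := fun y => B y t1) (G := fun y => px B y t1)
      (G' := pxx B x1 t1) hL hx1
      (fun y hy => hmaxB y hy t1 ht1I)
      (fun y hy => ((regB.2.1 y hy t1 ht1).2.1).hasDerivAt)
      (hBxx.hasDerivAt)
      ((hbc t1 ht1).1) ((hbc t1 ht1).2.1)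
  obtain ⟨hpx1, hpxx1⟩ := hspace
  have eB := eqB x1 hx1 t1 ht1
  have hbpos : 0 < B x1 t1 := (hpos x1 hx1 t1 ht1I).1
  have hqpos : 0 < p x1 t1 := (hpos x1 hx1 t1 ht1I).2.1
  have hqle : p x1 t1 ≤ Q_M * B x1 t1 := step1 x1 hx1 t1 ht1I
  have hbB : Bbar r Q_m Q_M z_m k K_bg H I_in l D < B x1 t1 :=
    lt_of_le_of_lt (le_max_right _ _) hKB
  -- the reaction term is negative
  have hE : 0 < Real.log ((H + I_in) / H) := Real.log_pos (by rw [lt_div_iff₀ hH]; linarith)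
  have hs : (0:ℝ) < z_m * l + D := by positivity
  have key : r * ((Q_M - Q_m) / Q_M) * Real.log ((H + I_in) / H)
      < (z_m * l + D) * (k * B x1 t1 + K_bg) := by
    have h1 : (1 / k) * ((r / (z_m * l + D)) * ((Q_M - Q_m) / Q_M) *
        Real.log ((H + I_in) / H) - K_bg) < B x1 t1 := hbB
    have h2 : (r / (z_m * l + D)) * ((Q_M - Q_m) / Q_M) * Real.log ((H + I_in) / H) - K_bg
        < k * B x1 t1 := by
      have h3 := mul_lt_mul_of_pos_left h1 hk
      calc (r / (z_m * l + D)) * ((Q_M - Q_m) / Q_M) * Real.log ((H + I_in) / H) - K_bg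
          = k * ((1 / k) * ((r / (z_m * l + D)) * ((Q_M - Q_m) / Q_M) *
            Real.log ((H + I_in) / H) - K_bg)) := by
              rw [← mul_assoc, mul_one_div, div_self hk.ne', one_mul]
        _ < k * B x1 t1 := h3
    have h4 : (r / (z_m * l + D)) * ((Q_M - Q_m) / Q_M) * Real.log ((H + I_in) / H)
        < k * B x1 t1 + K_bg := by linarith
    calc r * ((Q_M - Q_m) / Q_M) * Real.log ((H + I_in) / H)
        = (z_m * l + D) * ((r / (z_m * l + D)) * ((Q_M - Q_m) / Q_M) *
          Real.log ((H + I_in) / H)) := by field_simp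
      _ < (z_m * l + D) * (k * B x1 t1 + K_bg) := mul_lt_mul_of_pos_left h4 hs
  have hden : (0:ℝ) < z_m * (k * B x1 t1 + K_bg) := by positivity
  have hc1 : 1 - Q_m * B x1 t1 / p x1 t1 ≤ (Q_M - Q_m) / Q_M := by
    have h5 : Q_m / Q_M ≤ Q_m * B x1 t1 / p x1 t1 := by
      rw [div_le_div_iff₀ hQM hqpos]
      linarith [mul_le_mul_of_nonneg_left hqle hQm.le]
    have he : (Q_M - Q_m) / Q_M = 1 - Q_m / Q_M := by field_simp
    linarith
  have hc1pos : (0:ℝ) ≤ (Q_M - Q_m) / Q_M := div_nonneg (by linarith) hQM.le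
  have hh0 : 0 ≤ hfun z_m k K_bg H I_in (B x1 t1) := hfun_nonneg' hzm hk hKbg hH hIin hbpos
  have hhle := hfun_le' (b := B x1 t1) hzm hk hKbg hH hIin hbpos
  have hA : r * (1 - Q_m * B x1 t1 / p x1 t1) * hfun z_m k K_bg H I_in (B x1 t1)
      ≤ r * ((Q_M - Q_m) / Q_M) * hfun z_m k K_bg H I_in (B x1 t1) := by
    nlinarith [mul_le_mul_of_nonneg_left hc1 (mul_nonneg hr.le hh0)]
  have hB2 : r * ((Q_M - Q_m) / Q_M) * hfun z_m k K_bg H I_in (B x1 t1)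
      ≤ r * ((Q_M - Q_m) / Q_M) *
        (Real.log ((H + I_in) / H) / (z_m * (k * B x1 t1 + K_bg))) :=
    mul_le_mul_of_nonneg_left hhle (mul_nonneg hr.le hc1pos)
  have hB3 : r * ((Q_M - Q_m) / Q_M) *
      (Real.log ((H + I_in) / H) / (z_m * (k * B x1 t1 + K_bg))) < l + D / z_m := by
    rw [show r * ((Q_M - Q_m) / Q_M) *
        (Real.log ((H + I_in) / H) / (z_m * (k * B x1 t1 + K_bg)))
        = (r * ((Q_M - Q_m) / Q_M) * Real.log ((H + I_in) / H)) /
          (z_m * (k * B x1 t1 + K_bg)) by ring, div_lt_iff₀ hden]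
    calc r * ((Q_M - Q_m) / Q_M) * Real.log ((H + I_in) / H)
        < (z_m * l + D) * (k * B x1 t1 + K_bg) := key
      _ = (l + D / z_m) * (z_m * (k * B x1 t1 + K_bg)) := by field_simp
  have hfneg : r * (1 - Q_m * B x1 t1 / p x1 t1) * hfun z_m k K_bg H I_in (B x1 t1)
      - l - D / z_m < 0 := by linarith
  have hreact : r * (1 - Q_m * B x1 t1 / p x1 t1) * hfun z_m k K_bg H I_in (B x1 t1) * B x1 t1
      - l * B x1 t1 - (D / z_m) * B x1 t1 < 0 := by
    nlinarith [mul_neg_of_neg_of_pos hfneg hbpos]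
  have hpx1' : px B x1 t1 = 0 := hpx1
  rw [hpx1'] at eB
  linarith [htime, eB, hreact, mul_nonneg hα.le (neg_nonneg.2 hpxx1)]
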